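/- Let L be an e-cyclic residuated lattice. For a convex subalgebra H of L define the relation Θ_H = {(a, b) ∈ L × L : (a\b) ∧ (b\a) ∧ e ∈ H}. Then: (i) Θ_H is an equivalence relation on L compatible with ∨ and ∧ (i.e., a congruence of the lattice (L, ∨, ∧)); (ii) the Θ_H-class of e equals H; and (iii) for convex subalgebras H and K of L, H ⊆ K if and only if Θ_H ⊆ Θ_K. -/

import Mathlib

universe u

/-- A residuated lattice: a lattice-ordered monoid with left and right residuals.
`ldiv x z` is `x \ z` and `rdiv z y` is `z / y`. -/
class ResiduatedLattice (α : Type u) extends Lattice α, Monoid α where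
  ldiv : α → α → α
  rdiv : α → α → α
  mul_le_iff_le_ldiv : ∀ x y z : α, x * y ≤ z ↔ y ≤ ldiv x z
  mul_le_iff_le_rdiv : ∀ x y z : α, x * y ≤ z ↔ x ≤ rdiv z y

namespace ResiduatedLattice

variable {α : Type u} [ResiduatedLattice α]

/-- `L` is e-cyclic if `x \ e = e / x` for all `x`. -/
def ECyclic (α : Type u) [ResiduatedLattice α] : Prop :=
  ∀ x : α, ldiv x 1 = rdiv 1 x

/-- Absolute value: `|x| = x ⊓ (e / x) ⊓ e`. -/
def absv (x : α) : α := x ⊓ rdiv 1 x ⊓ 1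

/-- A convex subalgebra: contains `e`, closed under all the operations, and order-convex. -/
structure IsConvexSubalgebra (H : Set α) : Prop where
  one_mem : (1 : α) ∈ H
  mul_mem : ∀ ⦃x⦄, x ∈ H → ∀ ⦃y⦄, y ∈ H → x * y ∈ H
  sup_mem : ∀ ⦃x⦄, x ∈ H → ∀ ⦃y⦄, y ∈ H → x ⊔ y ∈ H
  inf_mem : ∀ ⦃x⦄, x ∈ H → ∀ ⦃y⦄, y ∈ H → x ⊓ y ∈ H
  ldiv_mem : ∀ ⦃x⦄, x ∈ H → ∀ ⦃y⦄, y ∈ H → ldiv x y ∈ H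
  rdiv_mem : ∀ ⦃x⦄, x ∈ H → ∀ ⦃y⦄, y ∈ H → rdiv x y ∈ H
  convex : ∀ ⦃a⦄, a ∈ H → ∀ ⦃b⦄, b ∈ H → ∀ ⦃x⦄, a ≤ x → x ≤ b → x ∈ H

/-- `C[S]`: the smallest convex subalgebra containing `S`. -/
def convexClosure (S : Set α) : Set α :=
  ⋂₀ {H : Set α | IsConvexSubalgebra H ∧ S ⊆ H}

end ResiduatedLattice

open ResiduatedLattice

/-- The relation `Θ_H`: `a Θ_H b` iff `(a\b) ⊓ (b\a) ⊓ e ∈ H`. -/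
def theta {α : Type u} [ResiduatedLattice α] (H : Set α) (a b : α) : Prop :=
  ldiv a b ⊓ ldiv b a ⊓ 1 ∈ H

/-
The relation `a Θ_H b` says that some element of `H` lies below both `a \ b` and `b \ a`
(meeting with `e` and using convexity shows this is equivalent). In this form each property
is a residuation inequality: `(a\b)(b\c) ≤ a\c` gives transitivity, `(a\b) ∧ (c\d)` lies below
both `(a∨c)\(b∨d)` and `(a∧c)\(b∧d)`, and `e\x = x` together with `x ≤ e/(x ∧ x\e ∧ e)` identifies
the class of `e` with `H`.
-/

namespace ResiduatedLattice

variable {α : Type u} [ResiduatedLattice α]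

lemma le_ldiv_iff {x y z : α} : y ≤ ldiv x z ↔ x * y ≤ z :=
  (mul_le_iff_le_ldiv x y z).symm

lemma le_rdiv_iff {x y z : α} : x ≤ rdiv z y ↔ x * y ≤ z :=
  (mul_le_iff_le_rdiv x y z).symm

instance : MulLeftMono α :=
  ⟨fun _ _ _ h => le_ldiv_iff.mp (h.trans (le_ldiv_iff.mpr le_rfl))⟩

instance : MulRightMono α :=
  ⟨fun _ _ _ h => le_rdiv_iff.mp (h.trans (le_rdiv_iff.mpr le_rfl))⟩

lemma mul_ldiv_le (a b : α) : a * ldiv a b ≤ b :=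
  le_ldiv_iff.mp le_rfl

lemma one_le_ldiv_self (a : α) : 1 ≤ ldiv a a :=
  le_ldiv_iff.mpr (mul_one a).le

lemma one_ldiv (x : α) : ldiv 1 x = x :=
  le_antisymm (by simpa only [one_mul] using mul_ldiv_le 1 x) (le_ldiv_iff.mpr (one_mul x).le)

lemma ldiv_mul_ldiv_le (a b c : α) : ldiv a b * ldiv b c ≤ ldiv a c := by
  rw [le_ldiv_iff, ← mul_assoc]
  exact (mul_le_mul_left (mul_ldiv_le a b) _).trans (mul_ldiv_le b c)

lemma inf_ldiv_le_ldiv_sup (a b c d : α) : ldiv a b ⊓ ldiv c d ≤ ldiv (a ⊔ c) (b ⊔ d) := by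
  rw [le_ldiv_iff, ← le_rdiv_iff, sup_le_iff, le_rdiv_iff, le_rdiv_iff]
  exact ⟨((mul_le_mul_right inf_le_left a).trans (mul_ldiv_le a b)).trans le_sup_left,
    ((mul_le_mul_right inf_le_right c).trans (mul_ldiv_le c d)).trans le_sup_right⟩

lemma inf_ldiv_le_ldiv_inf (a b c d : α) : ldiv a b ⊓ ldiv c d ≤ ldiv (a ⊓ c) (b ⊓ d) :=
  le_ldiv_iff.mpr <| le_inf
    ((mul_le_mul' inf_le_left inf_le_left).trans (mul_ldiv_le a b))
    ((mul_le_mul' inf_le_right inf_le_right).trans (mul_ldiv_le c d))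

end ResiduatedLattice

section Theta

variable {α : Type u} [ResiduatedLattice α] {H : Set α}

lemma theta_iff_exists_le (hH : IsConvexSubalgebra H) {a b : α} :
    theta H a b ↔ ∃ h ∈ H, h ≤ ldiv a b ⊓ ldiv b a := by
  refine ⟨fun hab => ⟨_, hab, inf_le_left⟩, ?_⟩
  rintro ⟨h, hH_mem, hle⟩
  exact hH.convex (hH.inf_mem hH_mem hH.one_mem) hH.one_mem (inf_le_inf_right 1 hle) inf_le_right

lemma theta_refl (hH : IsConvexSubalgebra H) (a : α) : theta H a a :=
  (theta_iff_exists_le hH).mpr ⟨1, hH.one_mem, le_inf (one_le_ldiv_self a) (one_le_ldiv_self a)⟩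

lemma theta_symm {a b : α} (hab : theta H a b) : theta H b a := by
  rwa [theta, inf_comm (ldiv b a)]

lemma theta_trans (hH : IsConvexSubalgebra H) {a b c : α} (hab : theta H a b)
    (hbc : theta H b c) : theta H a c := by
  refine (theta_iff_exists_le hH).mpr ⟨_, hH.inf_mem (hH.mul_mem hab hbc) (hH.mul_mem hbc hab), ?_⟩
  exact le_inf
    (inf_le_left.trans <| (mul_le_mul' (inf_le_left.trans inf_le_left)
      (inf_le_left.trans inf_le_left)).trans (ldiv_mul_ldiv_le a b c))
    (inf_le_right.trans <| (mul_le_mul' (inf_le_left.trans inf_le_right)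
      (inf_le_left.trans inf_le_right)).trans (ldiv_mul_ldiv_le c b a))

lemma theta_sup (hH : IsConvexSubalgebra H) {a b c d : α} (hab : theta H a b)
    (hcd : theta H c d) : theta H (a ⊔ c) (b ⊔ d) := by
  refine (theta_iff_exists_le hH).mpr ⟨_, hH.inf_mem hab hcd, le_inf ?_ ?_⟩
  · exact (inf_le_inf (inf_le_left.trans inf_le_left) (inf_le_left.trans inf_le_left)).trans
      (inf_ldiv_le_ldiv_sup a b c d)
  · exact (inf_le_inf (inf_le_left.trans inf_le_right) (inf_le_left.trans inf_le_right)).trans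
      (inf_ldiv_le_ldiv_sup b a d c)

lemma theta_inf (hH : IsConvexSubalgebra H) {a b c d : α} (hab : theta H a b)
    (hcd : theta H c d) : theta H (a ⊓ c) (b ⊓ d) := by
  refine (theta_iff_exists_le hH).mpr ⟨_, hH.inf_mem hab hcd, le_inf ?_ ?_⟩
  · exact (inf_le_inf (inf_le_left.trans inf_le_left) (inf_le_left.trans inf_le_left)).trans
      (inf_ldiv_le_ldiv_inf a b c d)
  · exact (inf_le_inf (inf_le_left.trans inf_le_right) (inf_le_left.trans inf_le_right)).trans
      (inf_ldiv_le_ldiv_inf b a d c)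

lemma theta_one_iff (hH : IsConvexSubalgebra H) (x : α) : theta H 1 x ↔ x ∈ H := by
  rw [theta, one_ldiv]
  refine ⟨fun hw => hH.convex hw (hH.rdiv_mem hH.one_mem hw) (inf_le_left.trans inf_le_left) ?_,
    fun hx => hH.inf_mem (hH.inf_mem hx (hH.ldiv_mem hx hH.one_mem)) hH.one_mem⟩
  exact le_rdiv_iff.mpr <| (mul_le_mul_right (inf_le_left.trans inf_le_right) x).trans
    (mul_ldiv_le x 1)

end Theta

theorem stmt5_general {α : Type u} [ResiduatedLattice α]
    (H : Set α) (hH : IsConvexSubalgebra H) :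
    Equivalence (theta H) ∧
    (∀ a b c d : α, theta H a b → theta H c d →
      theta H (a ⊔ c) (b ⊔ d) ∧ theta H (a ⊓ c) (b ⊓ d)) ∧
    {x : α | theta H 1 x} = H ∧
    (∀ K : Set α, IsConvexSubalgebra K →
      (H ⊆ K ↔ ∀ a b : α, theta H a b → theta K a b)) := by
  refine ⟨⟨theta_refl hH, theta_symm, theta_trans hH⟩,
    fun a b c d hab hcd => ⟨theta_sup hH hab hcd, theta_inf hH hab hcd⟩,
    Set.ext (theta_one_iff hH), fun K hK => ⟨fun hHK a b hab => hHK hab, fun hθ x hx => ?_⟩⟩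
  exact (theta_one_iff hK x).mp (hθ 1 x ((theta_one_iff hH x).mpr hx))

/-- `Θ_H` is a lattice congruence whose class of `e` is `H`,
and `H ⊆ K` iff `Θ_H ⊆ Θ_K`. -/
theorem stmt5 {α : Type u} [ResiduatedLattice α] (hec : ECyclic α)
    (H : Set α) (hH : IsConvexSubalgebra H) :
    Equivalence (theta H) ∧
    (∀ a b c d : α, theta H a b → theta H c d →
      theta H (a ⊔ c) (b ⊔ d) ∧ theta H (a ⊓ c) (b ⊓ d)) ∧
    {x : α | theta H 1 x} = H ∧
    (∀ K : Set α, IsConvexSubalgebra K →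
      (H ⊆ K ↔ ∀ a b : α, theta H a b → theta K a b)) :=
  stmt5_general H hH
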